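/- Let p be an odd prime. (i) If O : V₆ → V₆ is an invertible linear map satisfying β(Ov, Ow) = β(v, w) for all v, w ∈ V₆ and O(𝟙₆) = 𝟙₆, then for every T ∈ Σ₃(p) the image O(T) again lies in Σ₃(p). (ii) For any two T, T' ∈ Σ₃(p) there exists such an invertible linear map O (β-preserving and fixing 𝟙₆) with O(T) = T'. -/

import Mathlib

/-! Every `T ∈ Σ₃(p)` has a basis `e₁, e₂, e₃` with `e₁ + e₂ + e₃ = 𝟙₆`, because `GL(T)` acts
transitively on nonzero vectors. As `β` is symmetric and nondegenerate, `e` has a `β`-dual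
family `g`, and for odd `p` the correction `fᵢ = gᵢ - ½ ∑ₖ β(gᵢ, gₖ) eₖ` makes it isotropic, so
`(e, f)` is a hyperbolic frame of `V₆`. The linear map sending one hyperbolic frame to another is
an isometry; it fixes `𝟙₆ = ∑ eᵢ` and carries `T = span e` onto `T' = span e'`. -/

/-- The 6-dimensional phase space `V₆ = (Fin 3 → ZMod p) × (Fin 3 → ZMod p)`. -/
abbrev V6 (p : ℕ) := (Fin 3 → ZMod p) × (Fin 3 → ZMod p)

/-- Dot product on `Fin 3 → ZMod p`. -/
def dotP {p : ℕ} (x y : Fin 3 → ZMod p) : ZMod p := ∑ i, x i * y i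

/-- The bilinear form `β((x⃗,y⃗),(x⃗',y⃗')) = x⃗·x⃗' − y⃗·y⃗'`. -/
def betaF {p : ℕ} (v w : V6 p) : ZMod p := dotP v.1 w.1 - dotP v.2 w.2

/-- The all-ones vector `𝟙₆`. -/
def onesV (p : ℕ) : V6 p := (fun _ => 1, fun _ => 1)

/-- `Σ₃(p)`: the set of Lagrangian stochastic subspaces of `V₆`. -/
def Sigma3 (p : ℕ) : Set (Submodule (ZMod p) (V6 p)) :=
  {T | Module.finrank (ZMod p) T = 3 ∧ (∀ v ∈ T, ∀ w ∈ T, betaF v w = 0) ∧ onesV p ∈ T}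

open Module
open LinearMap (BilinForm)

section Basis

variable {K V : Type*} [Field K] [AddCommGroup V] [Module K V]

theorem exists_linearEquiv_apply_eq {u v : V} (hu : u ≠ 0) (hv : v ≠ 0) :
    ∃ g : V ≃ₗ[K] V, g u = v := by
  obtain ⟨g, hg⟩ := Submodule.exists_linearEquiv_restrict_eq
    ((LinearEquiv.toSpanNonzeroSingleton K V u hu).symm.trans
      (LinearEquiv.toSpanNonzeroSingleton K V v hv))
  have := hg (LinearEquiv.toSpanNonzeroSingleton K V u hu 1)
  rw [LinearEquiv.trans_apply, LinearEquiv.symm_apply_apply,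
    LinearEquiv.toSpanNonzeroSingleton_one, LinearEquiv.toSpanNonzeroSingleton_one] at this
  exact ⟨g, this.symm⟩

theorem Module.Basis.exists_basis_sum_eq {ι : Type*} [Fintype ι] [Nonempty ι]
    (b : Basis ι K V) {u : V} (hu : u ≠ 0) : ∃ b' : Basis ι K V, ∑ i, b' i = u := by
  have hsum : ∑ i, b i ≠ 0 := fun h => by
    have := Fintype.linearIndependent_iff.mp b.linearIndependent (fun _ => 1) (by simpa using h)
    exact one_ne_zero (this (Classical.arbitrary ι))
  obtain ⟨g, hg⟩ := exists_linearEquiv_apply_eq (K := K) hsum hu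
  exact ⟨b.map g, by simp [← map_sum, hg]⟩

theorem Submodule.exists_linearIndependent_span_eq_sum_eq [FiniteDimensional K V] {n : ℕ}
    {T : Submodule K V} (hT : finrank K T = n) {u : V} (hu : u ∈ T) (hu0 : u ≠ 0) :
    ∃ e : Fin n → V, LinearIndependent K e ∧ span K (Set.range e) = T ∧ ∑ i, e i = u := by
  have : Nonempty (Fin n) := ⟨⟨0, Nat.pos_of_ne_zero fun hn => hu0 <| by
    simpa [Submodule.finrank_eq_zero.mp (hT.trans hn)] using hu⟩⟩
  obtain ⟨b, hb⟩ := (finBasisOfFinrankEq K T hT).exists_basis_sum_eq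
    (u := ⟨u, hu⟩) (by simpa using hu0)
  refine ⟨T.subtype ∘ b, b.linearIndependent.map' _ T.ker_subtype, ?_, ?_⟩
  · rw [Set.range_comp, Submodule.span_image, b.span_eq, Submodule.map_subtype_top]
  · simpa using congrArg Subtype.val hb

end Basis

section HyperbolicFrame

variable {K V ι : Type*} [Field K] [AddCommGroup V] [Module K V] [DecidableEq ι]
  {B : BilinForm K V}

structure IsHyperbolicFrame (B : BilinForm K V) (e f : ι → V) : Prop where
  isotropic_left : ∀ i j, B (e i) (e j) = 0
  isotropic_right : ∀ i j, B (f i) (f j) = 0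
  apply_left_right : ∀ i j, B (e i) (f j) = if i = j then 1 else 0

namespace IsHyperbolicFrame

variable {e f : ι → V}

theorem linearIndependent [Fintype ι] (h : IsHyperbolicFrame B e f) :
    LinearIndependent K (Sum.elim e f) := by
  rw [Fintype.linearIndependent_iff]
  intro a ha
  rw [Fintype.sum_sum_type] at ha
  simp only [Sum.elim_inl, Sum.elim_inr] at ha
  have hf : ∀ k, a (.inr k) = 0 := fun k => by
    simpa [h.isotropic_left, h.apply_left_right] using congrArg (B (e k)) ha
  have he : ∀ k, a (.inl k) = 0 := fun k => by
    simpa [hf, h.apply_left_right] using congrArg (B.flip (f k)) ha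
  rintro (k | k)
  exacts [he k, hf k]

theorem apply_sumElim (hB : B.IsSymm) (h : IsHyperbolicFrame B e f) (s t : ι ⊕ ι) :
    B (Sum.elim e f s) (Sum.elim e f t) = if s = t.swap then 1 else 0 := by
  rcases s with i | i <;> rcases t with j | j
  · simp [h.isotropic_left]
  · simp [h.apply_left_right]
  · simp [hB.eq (f i), h.apply_left_right, eq_comm]
  · simp [h.isotropic_right]

theorem exists_isometry [Fintype ι] [FiniteDimensional K V] (hB : B.IsSymm) {e' f' : ι → V}
    (h : IsHyperbolicFrame B e f) (h' : IsHyperbolicFrame B e' f')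
    (hdim : finrank K V = 2 * Fintype.card ι) :
    ∃ O : V ≃ₗ[K] V, (∀ v w, B (O v) (O w) = B v w) ∧ (∀ i, O (e i) = e' i) ∧
      ∀ i, O (f i) = f' i := by
  have hcard : Fintype.card (ι ⊕ ι) = finrank K V := by rw [Fintype.card_sum, hdim, two_mul]
  let b := basisOfLinearIndependentOfCardEqFinrank' _ h.linearIndependent hcard
  let b' := basisOfLinearIndependentOfCardEqFinrank' _ h'.linearIndependent hcard
  let O := b.equiv b' (Equiv.refl _)
  have hO : ∀ s, O (Sum.elim e f s) = Sum.elim e' f' s := fun s => by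
    simpa [b, b'] using b.equiv_apply (i := s) b' (Equiv.refl _)
  have hisom : B.compl₁₂ O.toLinearMap O.toLinearMap = B := by
    refine LinearMap.BilinForm.ext_basis b fun s t => ?_
    simp only [b, coe_basisOfLinearIndependentOfCardEqFinrank', LinearMap.compl₁₂_apply,
      LinearEquiv.coe_coe, hO, h.apply_sumElim hB, h'.apply_sumElim hB]
  exact ⟨O, fun v w => LinearMap.congr_fun₂ hisom v w, fun i => hO (.inl i),
    fun i => hO (.inr i)⟩

end IsHyperbolicFrame

end HyperbolicFrame

section Existence

variable {K V ι : Type*} [Field K] [AddCommGroup V] [Module K V] [FiniteDimensional K V]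
  {B : BilinForm K V}

theorem LinearIndependent.exists_bilinForm_dual [DecidableEq ι] (hB : B.Nondegenerate)
    {e : ι → V} (he : LinearIndependent K e) :
    ∃ g : ι → V, ∀ i j, B (e i) (g j) = if i = j then 1 else 0 := by
  have hcoord : ∀ j, ∃ φ : Dual K V, ∀ i, φ (e i) = if i = j then 1 else 0 := fun j => by
    obtain ⟨φ, hφ⟩ := LinearMap.exists_extend ((Basis.span he).coord j)
    refine ⟨φ, fun i => ?_⟩
    have := LinearMap.congr_fun hφ (Basis.span he i)
    simpa [Basis.span_apply, Finsupp.single_apply, eq_comm] using this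
  choose φ hφ using hcoord
  refine ⟨fun j => (B.flip.toDual hB.flip).symm (φ j), fun i j => ?_⟩
  exact (LinearMap.BilinForm.apply_toDual_symm_apply (hB := hB.flip) (φ j) (e i)).trans (hφ j i)

theorem LinearIndependent.exists_isHyperbolicFrame [Fintype ι] [DecidableEq ι] (hB : B.IsSymm)
    (hnd : B.Nondegenerate) (h2 : (2 : K) ≠ 0) {e : ι → V} (he : LinearIndependent K e)
    (hiso : ∀ i j, B (e i) (e j) = 0) : ∃ f, IsHyperbolicFrame B e f := by
  obtain ⟨g, hg⟩ := he.exists_bilinForm_dual hnd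
  let f i := g i - (2⁻¹ : K) • ∑ k, B (g i) (g k) • e k
  have hef : ∀ i j, B (e i) (f j) = if i = j then 1 else 0 := fun i j => by
    simp [f, hg, hiso]
  refine ⟨f, hiso, fun i j => ?_, hef⟩
  have hfe : ∀ k, B (f i) (e k) = if k = i then 1 else 0 := fun k => by rw [hB.eq, hef]
  have hfg : ∀ k, B (f i) (g k) = B (g i) (g k) - 2⁻¹ * B (g i) (g k) := fun k => by
    simp [f, hg]
  have hff : B (f i) (f j) = B (f i) (g j) - 2⁻¹ * B (g j) (g i) := by
    change B (f i) (g j - (2⁻¹ : K) • ∑ k, B (g j) (g k) • e k) = _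
    simp [hfe]
  rw [hff, hfg, hB.eq (g j)]
  linear_combination (-B (g i) (g j)) * mul_inv_cancel₀ h2

end Existence

section V6

variable {p : ℕ}

def betaForm (p : ℕ) : BilinForm (ZMod p) (V6 p) :=
  (dotProductBilin (ZMod p) (ZMod p)).compl₁₂ (LinearMap.fst _ _ _) (LinearMap.fst _ _ _) -
    (dotProductBilin (ZMod p) (ZMod p)).compl₁₂ (LinearMap.snd _ _ _) (LinearMap.snd _ _ _)

@[simp]
theorem betaForm_apply (v w : V6 p) : betaForm p v w = betaF v w := rfl

theorem betaForm_isSymm : (betaForm p).IsSymm :=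
  ⟨fun v w => by simp [betaF, dotP, mul_comm]⟩

theorem betaForm_nondegenerate : (betaForm p).Nondegenerate := by
  have hrefl := (LinearMap.BilinForm.isSymm_iff.mp (betaForm_isSymm (p := p))).isRefl
  refine hrefl.nondegenerate_iff_separatingLeft.mpr fun v hv => ?_
  ext i
  · simpa [betaF, dotP, Pi.single_apply] using hv (Pi.single i 1, 0)
  · simpa [betaF, dotP, Pi.single_apply] using hv (0, Pi.single i 1)

theorem map_mem_Sigma3 {O : V6 p ≃ₗ[ZMod p] V6 p} (hO : ∀ v w, betaF (O v) (O w) = betaF v w)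
    (h1 : O (onesV p) = onesV p) {T : Submodule (ZMod p) (V6 p)} (hT : T ∈ Sigma3 p) :
    T.map (O : V6 p →ₗ[ZMod p] V6 p) ∈ Sigma3 p := by
  obtain ⟨hrank, hiso, hone⟩ := hT
  refine ⟨by rwa [LinearEquiv.finrank_map_eq], ?_, ⟨onesV p, hone, h1⟩⟩
  rintro _ ⟨v, hv, rfl⟩ _ ⟨w, hw, rfl⟩
  exact (hO v w).trans (hiso v hv w hw)

variable [Fact p.Prime]

theorem onesV_ne_zero : onesV p ≠ 0 := fun h =>
  one_ne_zero (congrFun (congrArg Prod.fst h) 0)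

theorem exists_isHyperbolicFrame_of_mem_Sigma3 (hp : p ≠ 2) {T : Submodule (ZMod p) (V6 p)}
    (hT : T ∈ Sigma3 p) : ∃ e f : Fin 3 → V6 p, IsHyperbolicFrame (betaForm p) e f ∧
      Submodule.span (ZMod p) (Set.range e) = T ∧ ∑ i, e i = onesV p := by
  obtain ⟨hrank, hiso, hone⟩ := hT
  obtain ⟨e, he, hspan, hsum⟩ :=
    Submodule.exists_linearIndependent_span_eq_sum_eq hrank hone onesV_ne_zero
  have hmem : ∀ i, e i ∈ T := fun i => hspan ▸ Submodule.subset_span ⟨i, rfl⟩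
  have h2 : (2 : ZMod p) ≠ 0 := Ring.two_ne_zero (by rwa [ZMod.ringChar_zmod_n])
  obtain ⟨f, hf⟩ := he.exists_isHyperbolicFrame betaForm_isSymm betaForm_nondegenerate h2
    fun i j => hiso _ (hmem i) _ (hmem j)
  exact ⟨e, f, hf, hspan, hsum⟩

end V6

/-- (i) Any invertible linear map `O` on `V₆` preserving `β` and fixing `𝟙₆` maps elements
of `Σ₃(p)` to elements of `Σ₃(p)`; (ii) the group of such maps acts transitively on `Σ₃(p)`. -/
theorem orthogonal_stochastic_preserves_and_transitive (p : ℕ) [Fact p.Prime] (hodd : p ≠ 2) :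
    (∀ O : V6 p ≃ₗ[ZMod p] V6 p,
      (∀ v w : V6 p, betaF (O v) (O w) = betaF v w) → O (onesV p) = onesV p →
      ∀ T ∈ Sigma3 p, T.map (O : V6 p →ₗ[ZMod p] V6 p) ∈ Sigma3 p) ∧
    (∀ T ∈ Sigma3 p, ∀ T' ∈ Sigma3 p, ∃ O : V6 p ≃ₗ[ZMod p] V6 p,
      (∀ v w : V6 p, betaF (O v) (O w) = betaF v w) ∧ O (onesV p) = onesV p ∧
      T.map (O : V6 p →ₗ[ZMod p] V6 p) = T') := by
  refine ⟨fun O hO h1 T hT => map_mem_Sigma3 hO h1 hT, fun T hT T' hT' => ?_⟩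
  obtain ⟨e, f, hf, rfl, hsum⟩ := exists_isHyperbolicFrame_of_mem_Sigma3 hodd hT
  obtain ⟨e', f', hf', rfl, hsum'⟩ := exists_isHyperbolicFrame_of_mem_Sigma3 hodd hT'
  obtain ⟨O, hO, hOe, -⟩ := hf.exists_isometry betaForm_isSymm hf' (by simp)
  refine ⟨O, hO, ?_, ?_⟩
  · simpa only [hOe, hsum, hsum'] using map_sum O e Finset.univ
  · rw [Submodule.map_span, ← Set.range_comp]
    simp only [Function.comp_def, LinearEquiv.coe_coe, hOe]
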